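/- arXiv:hep-th/0008163 — 2 statements merged into one kernel-verified Lean document; each statement's English description precedes it below -/
import Mathlib

section
/- (No-interaction theorem, degenerate-span case) Let x₁, x₂, x₃, x₄ be four distinct points in four-dimensional Minkowski affine space, x an apex point with each qᵢ := x − xᵢ a nonzero future null vector, with q₁ not parallel to q₂, q₃, q₄, and dim span{q₁,q₂,q₃,q₄} = 3 = dim span{q₂,q₃,q₄}. Let w₁, w₂, w₃, w₄ ∈ V satisfy Σᵢ qᵢ ⊗ wᵢ = 0 and Σᵢ qᵢ ⊗ (xᵢ ∧ wᵢ) = 0 (where xᵢ ∧ wᵢ ∈ Λ²V using position vectors relative to a fixed origin). Then w₁ = w₂ = w₃ = w₄ = 0. -/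
/-- The Minkowski bilinear form of signature (+,-,-,-) on ℝ⁴. -/
def mink (p q : Fin 4 → ℝ) : ℝ :=
  p 0 * q 0 - p 1 * q 1 - p 2 * q 2 - p 3 * q 3

/-- A vector is null if it has zero Minkowski norm. -/
def IsNull (p : Fin 4 → ℝ) : Prop := mink p p = 0

/-- Two vectors are parallel if one is a scalar multiple of the other. -/
def Par (p q : Fin 4 → ℝ) : Prop := ∃ c : ℝ, q = c • p ∨ p = c • q

/-- A future null vector (time orientation: positive 0th component). -/
def FutureNull (p : Fin 4 → ℝ) : Prop := p ≠ 0 ∧ IsNull p ∧ 0 < p 0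

/-- Wedge product of two vectors in the exterior algebra of ℝ⁴. -/
noncomputable def wedge (u v : Fin 4 → ℝ) : ExteriorAlgebra ℝ (Fin 4 → ℝ) :=
  ExteriorAlgebra.ι ℝ u * ExteriorAlgebra.ι ℝ v

/- ### Auxiliary lemmas -/

lemma mink_symm (p q : Fin 4 → ℝ) : mink p q = mink q p := by
  unfold mink; ring

/-- Two orthogonal future null vectors are proportional. -/
lemma null_orth {p q : Fin 4 → ℝ} (hp : FutureNull p) (hq : FutureNull q)
    (h : mink p q = 0) : ∃ t : ℝ, q = t • p := by
  obtain ⟨-, hpn, hppos⟩ := hp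
  obtain ⟨-, hqn, -⟩ := hq
  unfold IsNull mink at hpn hqn
  unfold mink at h
  have hsum : (p 0 * q 1 - q 0 * p 1) ^ 2 + (p 0 * q 2 - q 0 * p 2) ^ 2
      + (p 0 * q 3 - q 0 * p 3) ^ 2 = 0 := by
    linear_combination (-(p 0 ^ 2)) * hqn + (-(q 0 ^ 2)) * hpn + (2 * p 0 * q 0) * h
  have e1 : p 0 * q 1 - q 0 * p 1 = 0 := by
    nlinarith [sq_nonneg (p 0 * q 1 - q 0 * p 1), sq_nonneg (p 0 * q 2 - q 0 * p 2),
      sq_nonneg (p 0 * q 3 - q 0 * p 3)]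
  have e2 : p 0 * q 2 - q 0 * p 2 = 0 := by
    nlinarith [sq_nonneg (p 0 * q 1 - q 0 * p 1), sq_nonneg (p 0 * q 2 - q 0 * p 2),
      sq_nonneg (p 0 * q 3 - q 0 * p 3)]
  have e3 : p 0 * q 3 - q 0 * p 3 = 0 := by
    nlinarith [sq_nonneg (p 0 * q 1 - q 0 * p 1), sq_nonneg (p 0 * q 2 - q 0 * p 2),
      sq_nonneg (p 0 * q 3 - q 0 * p 3)]
  have hp0 : p 0 ≠ 0 := ne_of_gt hppos
  refine ⟨q 0 / p 0, ?_⟩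
  have c0 : q 0 = q 0 / p 0 * p 0 := by field_simp
  have c1 : q 1 = q 0 / p 0 * p 1 := by field_simp; linarith
  have c2 : q 2 = q 0 / p 0 * p 2 := by field_simp; linarith
  have c3 : q 3 = q 0 / p 0 * p 3 := by field_simp; linarith
  funext i
  fin_cases i
  · exact c0
  · exact c1
  · exact c2
  · exact c3

/-- Solving a symmetric 3×3 homogeneous system with zero diagonal over any module. -/
lemma elim3 {M : Type*} [AddCommGroup M] [Module ℝ M] {g23 g24 g34 : ℝ}
    (h23 : g23 ≠ 0) (h24 : g24 ≠ 0) (h34 : g34 ≠ 0) {u₂ u₃ u₄ : M}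
    (e2 : g23 • u₃ + g24 • u₄ = 0) (e3 : g23 • u₂ + g34 • u₄ = 0)
    (e4 : g24 • u₂ + g34 • u₃ = 0) : u₂ = 0 ∧ u₃ = 0 ∧ u₄ = 0 := by
  have h4 : (2 * (g24 * g34)) • u₄ = 0 := by
    linear_combination (norm := module) g34 • e2 + g24 • e3 - g23 • e4
  have hne : (2 : ℝ) * (g24 * g34) ≠ 0 := mul_ne_zero two_ne_zero (mul_ne_zero h24 h34)
  have hu4 : u₄ = 0 := (smul_eq_zero.mp h4).resolve_left hne
  have hu2 : u₂ = 0 := by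
    rw [hu4, smul_zero, add_zero] at e3
    exact (smul_eq_zero.mp e3).resolve_left h23
  have hu3 : u₃ = 0 := by
    rw [hu4, smul_zero, add_zero] at e2
    exact (smul_eq_zero.mp e2).resolve_left h23
  exact ⟨hu2, hu3, hu4⟩

noncomputable def detIJ (i j : Fin 4) : (Fin 4 → ℝ) [⋀^Fin 2]→ₗ[ℝ] ℝ :=
  (Matrix.detRowAlternating (R := ℝ) (n := Fin 2)).compLinearMap
    (LinearMap.pi fun k : Fin 2 => LinearMap.proj (![i, j] k))

noncomputable def famIJ (i j : Fin 4) : ∀ n : ℕ, (Fin 4 → ℝ) [⋀^Fin n]→ₗ[ℝ] ℝ :=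
  fun n => match n with
  | 2 => detIJ i j
  | _ => 0

lemma wedge_minor {u w : Fin 4 → ℝ} (h : wedge u w = 0) (i j : Fin 4) :
    u i * w j = u j * w i := by
  have h2 := congrArg (ExteriorAlgebra.liftAlternating (famIJ i j)) h
  rw [wedge, map_zero, ExteriorAlgebra.liftAlternating_ι_mul,
    ExteriorAlgebra.liftAlternating_ι] at h2
  have h3 : Matrix.det (Matrix.of fun a b : Fin 2 => ![u, w] a (![i, j] b)) = 0 := h2
  rw [Matrix.det_fin_two] at h3
  simp at h3
  linarith

/-- If the wedge product of two vectors vanishes and the second is nonzero,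
the first is a multiple of the second. -/
lemma wedge_dep {u w : Fin 4 → ℝ} (h : wedge u w = 0) (hw : w ≠ 0) :
    ∃ c : ℝ, u = c • w := by
  obtain ⟨k, hk⟩ := Function.ne_iff.mp hw
  have hk' : w k ≠ 0 := hk
  refine ⟨u k / w k, ?_⟩
  funext i
  have hm := wedge_minor h i k
  show u i = u k / w k * w i
  rw [div_mul_eq_mul_div, eq_div_iff hk']
  linarith

lemma wedge_smul_right (u v : Fin 4 → ℝ) (c : ℝ) : wedge u (c • v) = c • wedge u v := by
  unfold wedge; rw [map_smul, mul_smul_comm]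

lemma wedge_sub_left (u v w : Fin 4 → ℝ) : wedge (u - v) w = wedge u w - wedge v w := by
  unfold wedge; rw [map_sub, sub_mul]

lemma finrank_span_pair_le (a b : Fin 4 → ℝ) :
    Module.finrank ℝ (Submodule.span ℝ ({a, b} : Set (Fin 4 → ℝ))) ≤ 2 := by
  classical
  refine (finrank_span_le_card _).trans ?_
  have : ({a, b} : Set (Fin 4 → ℝ)).toFinset ⊆ {a, b} := by
    intro z hz
    simpa using Set.mem_toFinset.mp hz
  calc ({a, b} : Set (Fin 4 → ℝ)).toFinset.card ≤ ({a, b} : Finset (Fin 4 → ℝ)).card :=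
        Finset.card_le_card this
    _ ≤ 2 := (Finset.card_insert_le _ _).trans (by simp)

lemma span_le_pair_finrank {s : Set (Fin 4 → ℝ)} {p q : Fin 4 → ℝ}
    (h : s ⊆ (Submodule.span ℝ ({p, q} : Set (Fin 4 → ℝ)) : Submodule ℝ (Fin 4 → ℝ))) :
    Module.finrank ℝ (Submodule.span ℝ s) ≤ 2 :=
  le_trans (Submodule.finrank_mono (Submodule.span_le.mpr h)) (finrank_span_pair_le p q)

theorem no_interaction_degenerate_case
    (x₁ x₂ x₃ x₄ x : Fin 4 → ℝ)
    (hdist : x₁ ≠ x₂ ∧ x₁ ≠ x₃ ∧ x₁ ≠ x₄ ∧ x₂ ≠ x₃ ∧ x₂ ≠ x₄ ∧ x₃ ≠ x₄)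
    (hfn₁ : FutureNull (x - x₁)) (hfn₂ : FutureNull (x - x₂))
    (hfn₃ : FutureNull (x - x₃)) (hfn₄ : FutureNull (x - x₄))
    (h₁₂ : ¬ Par (x - x₁) (x - x₂)) (h₁₃ : ¬ Par (x - x₁) (x - x₃))
    (h₁₄ : ¬ Par (x - x₁) (x - x₄))
    (hdim3 : Module.finrank ℝ
      (Submodule.span ℝ ({x - x₂, x - x₃, x - x₄} : Set (Fin 4 → ℝ))) = 3)
    (hdim4 : Module.finrank ℝ
      (Submodule.span ℝ ({x - x₁, x - x₂, x - x₃, x - x₄} : Set (Fin 4 → ℝ))) = 3)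
    (w₁ w₂ w₃ w₄ : Fin 4 → ℝ)
    (hQ : ∀ v : Fin 4 → ℝ,
      mink (x - x₁) v • w₁ + mink (x - x₂) v • w₂ +
      mink (x - x₃) v • w₃ + mink (x - x₄) v • w₄ = 0)
    (hB : ∀ v : Fin 4 → ℝ,
      mink (x - x₁) v • wedge x₁ w₁ + mink (x - x₂) v • wedge x₂ w₂ +
      mink (x - x₃) v • wedge x₃ w₃ + mink (x - x₄) v • wedge x₄ w₄ = 0) :
    w₁ = 0 ∧ w₂ = 0 ∧ w₃ = 0 ∧ w₄ = 0 := by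
  obtain ⟨hd12, hd13, hd14, hd23, hd24, hd34⟩ := hdist
  set q₁ := x - x₁ with hq₁def
  set q₂ := x - x₂ with hq₂def
  set q₃ := x - x₃ with hq₃def
  set q₄ := x - x₄ with hq₄def
  -- Step A : pairwise non-orthogonality of q₂, q₃, q₄
  have hg23 : mink q₂ q₃ ≠ 0 := by
    intro h0
    obtain ⟨t, ht⟩ := null_orth hfn₂ hfn₃ h0
    have hsub : ({q₂, q₃, q₄} : Set (Fin 4 → ℝ)) ⊆
        (Submodule.span ℝ ({q₂, q₄} : Set (Fin 4 → ℝ)) : Submodule ℝ (Fin 4 → ℝ)) := by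
      intro z hz
      simp only [Set.mem_insert_iff, Set.mem_singleton_iff] at hz
      rcases hz with rfl | rfl | rfl
      · exact Submodule.subset_span (Set.mem_insert _ _)
      · rw [ht]
        exact Submodule.smul_mem _ _ (Submodule.subset_span (Set.mem_insert _ _))
      · exact Submodule.subset_span (Set.subset_insert _ _ rfl)
    have := span_le_pair_finrank hsub
    omega
  have hg24 : mink q₂ q₄ ≠ 0 := by
    intro h0
    obtain ⟨t, ht⟩ := null_orth hfn₂ hfn₄ h0
    have hsub : ({q₂, q₃, q₄} : Set (Fin 4 → ℝ)) ⊆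
        (Submodule.span ℝ ({q₂, q₃} : Set (Fin 4 → ℝ)) : Submodule ℝ (Fin 4 → ℝ)) := by
      intro z hz
      simp only [Set.mem_insert_iff, Set.mem_singleton_iff] at hz
      rcases hz with rfl | rfl | rfl
      · exact Submodule.subset_span (Set.mem_insert _ _)
      · exact Submodule.subset_span (Set.subset_insert _ _ rfl)
      · rw [ht]
        exact Submodule.smul_mem _ _ (Submodule.subset_span (Set.mem_insert _ _))
    have := span_le_pair_finrank hsub
    omega
  have hg34 : mink q₃ q₄ ≠ 0 := by
    intro h0
    obtain ⟨t, ht⟩ := null_orth hfn₃ hfn₄ h0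
    have hsub : ({q₂, q₃, q₄} : Set (Fin 4 → ℝ)) ⊆
        (Submodule.span ℝ ({q₂, q₃} : Set (Fin 4 → ℝ)) : Submodule ℝ (Fin 4 → ℝ)) := by
      intro z hz
      simp only [Set.mem_insert_iff, Set.mem_singleton_iff] at hz
      rcases hz with rfl | rfl | rfl
      · exact Submodule.subset_span (Set.mem_insert _ _)
      · exact Submodule.subset_span (Set.subset_insert _ _ rfl)
      · rw [ht]
        exact Submodule.smul_mem _ _ (Submodule.subset_span (Set.subset_insert _ _ rfl))
    have := span_le_pair_finrank hsub
    omega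
  -- Step C : q₁ lies in the span of q₂, q₃, q₄
  have hle : Submodule.span ℝ ({q₂, q₃, q₄} : Set (Fin 4 → ℝ)) ≤
      Submodule.span ℝ ({q₁, q₂, q₃, q₄} : Set (Fin 4 → ℝ)) :=
    Submodule.span_mono (Set.subset_insert _ _)
  have heq : Submodule.span ℝ ({q₂, q₃, q₄} : Set (Fin 4 → ℝ)) =
      Submodule.span ℝ ({q₁, q₂, q₃, q₄} : Set (Fin 4 → ℝ)) :=
    Submodule.eq_of_le_of_finrank_eq hle (hdim3.trans hdim4.symm)
  have hq1mem : q₁ ∈ Submodule.span ℝ ({q₂, q₃, q₄} : Set (Fin 4 → ℝ)) := by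
    rw [heq]
    exact Submodule.subset_span (Set.mem_insert _ _)
  rw [Submodule.mem_span_insert] at hq1mem
  obtain ⟨a₂, z, hz, hq1eq⟩ := hq1mem
  rw [Submodule.mem_span_insert] at hz
  obtain ⟨a₃, z', hz', hzeq⟩ := hz
  rw [Submodule.mem_span_singleton] at hz'
  obtain ⟨a₄, hz'eq⟩ := hz'
  subst hz'eq hzeq
  -- hq1eq : q₁ = a₂ • q₂ + (a₃ • q₃ + a₄ • q₄)
  have hlin : ∀ v : Fin 4 → ℝ,
      mink q₁ v = a₂ * mink q₂ v + a₃ * mink q₃ v + a₄ * mink q₄ v := by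
    intro v
    rw [hq1eq]
    simp only [mink, Pi.add_apply, Pi.smul_apply, smul_eq_mul]
    ring
  -- null conditions
  have hn1 : mink q₁ q₁ = 0 := hfn₁.2.1
  have hn2 : mink q₂ q₂ = 0 := hfn₂.2.1
  have hn3 : mink q₃ q₃ = 0 := hfn₃.2.1
  have hn4 : mink q₄ q₄ = 0 := hfn₄.2.1
  -- Step F : all coefficients aⱼ are nonzero
  have s21 : mink q₂ q₁ = mink q₁ q₂ := mink_symm _ _
  have s31 : mink q₃ q₁ = mink q₁ q₃ := mink_symm _ _
  have s41 : mink q₄ q₁ = mink q₁ q₄ := mink_symm _ _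
  have s32 : mink q₃ q₂ = mink q₂ q₃ := mink_symm _ _
  have s42 : mink q₄ q₂ = mink q₂ q₄ := mink_symm _ _
  have s43 : mink q₄ q₃ = mink q₃ q₄ := mink_symm _ _
  have h2' : mink q₁ q₂ = a₃ * mink q₂ q₃ + a₄ * mink q₂ q₄ := by
    rw [hlin q₂, hn2, s32, s42]; ring
  have h3' : mink q₁ q₃ = a₂ * mink q₂ q₃ + a₄ * mink q₃ q₄ := by
    rw [hlin q₃, hn3, s43]; ring
  have h4' : mink q₁ q₄ = a₂ * mink q₂ q₄ + a₃ * mink q₃ q₄ := by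
    rw [hlin q₄, hn4]; ring
  have h1' : (0 : ℝ) = a₂ * mink q₁ q₂ + a₃ * mink q₁ q₃ + a₄ * mink q₁ q₄ := by
    rw [← hn1, hlin q₁, s21, s31, s41]
  rw [h2', h3', h4'] at h1'
  have hnullid : a₂ * a₃ * mink q₂ q₃ + a₂ * a₄ * mink q₂ q₄ + a₃ * a₄ * mink q₃ q₄ = 0 := by
    linear_combination (-1/2 : ℝ) * h1'
  have ha₂ : a₂ ≠ 0 := by
    rintro rfl
    have h34 : a₃ * a₄ * mink q₃ q₄ = 0 := by linarith [hnullid]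
    rcases mul_eq_zero.mp h34 with h | h
    · rcases mul_eq_zero.mp h with h | h
      · subst h
        exact h₁₄ ⟨a₄, Or.inr (by rw [hq1eq]; funext i; simp)⟩
      · subst h
        exact h₁₃ ⟨a₃, Or.inr (by rw [hq1eq]; funext i; simp)⟩
    · exact hg34 h
  have ha₃ : a₃ ≠ 0 := by
    rintro rfl
    have h24 : a₂ * a₄ * mink q₂ q₄ = 0 := by linarith [hnullid]
    rcases mul_eq_zero.mp h24 with h | h
    · rcases mul_eq_zero.mp h with h | h
      · subst h
        exact h₁₄ ⟨a₄, Or.inr (by rw [hq1eq]; funext i; simp)⟩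
      · subst h
        exact h₁₂ ⟨a₂, Or.inr (by rw [hq1eq]; funext i; simp)⟩
    · exact hg24 h
  have ha₄ : a₄ ≠ 0 := by
    rintro rfl
    have h23 : a₂ * a₃ * mink q₂ q₃ = 0 := by linarith [hnullid]
    rcases mul_eq_zero.mp h23 with h | h
    · rcases mul_eq_zero.mp h with h | h
      · subst h
        exact h₁₃ ⟨a₃, Or.inr (by rw [hq1eq]; funext i; simp)⟩
      · subst h
        exact h₁₂ ⟨a₂, Or.inr (by rw [hq1eq]; funext i; simp)⟩
    · exact hg23 h
  -- Step E : consequences of hQ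
  have hu : ∀ v : Fin 4 → ℝ,
      mink q₂ v • (w₂ + a₂ • w₁) + mink q₃ v • (w₃ + a₃ • w₁) +
      mink q₄ v • (w₄ + a₄ • w₁) = 0 := by
    intro v
    have h0 := hQ v
    rw [hlin v] at h0
    linear_combination (norm := module) h0
  have hU : ∀ v : Fin 4 → ℝ,
      mink q₂ v • (wedge x₂ w₂ + a₂ • wedge x₁ w₁) +
      mink q₃ v • (wedge x₃ w₃ + a₃ • wedge x₁ w₁) +
      mink q₄ v • (wedge x₄ w₄ + a₄ • wedge x₁ w₁) = 0 := by
    intro v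
    have h0 := hB v
    rw [hlin v] at h0
    linear_combination (norm := module) h0
  -- apply elim3 to the w-system
  have euw : (w₂ + a₂ • w₁) = 0 ∧ (w₃ + a₃ • w₁) = 0 ∧ (w₄ + a₄ • w₁) = 0 := by
    have e2 := hu q₂
    have e3 := hu q₃
    have e4 := hu q₄
    rw [hn2, zero_smul, zero_add, s32, s42] at e2
    rw [hn3, zero_smul, add_zero, s43] at e3
    rw [hn4, zero_smul, add_zero] at e4
    exact elim3 hg23 hg24 hg34 e2 e3 e4
  have eUW : (wedge x₂ w₂ + a₂ • wedge x₁ w₁) = 0 ∧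
      (wedge x₃ w₃ + a₃ • wedge x₁ w₁) = 0 ∧
      (wedge x₄ w₄ + a₄ • wedge x₁ w₁) = 0 := by
    have e2 := hU q₂
    have e3 := hU q₃
    have e4 := hU q₄
    rw [hn2, zero_smul, zero_add, s32, s42] at e2
    rw [hn3, zero_smul, add_zero, s43] at e3
    rw [hn4, zero_smul, add_zero] at e4
    exact elim3 hg23 hg24 hg34 e2 e3 e4
  obtain ⟨ew2, ew3, ew4⟩ := euw
  obtain ⟨eW2, eW3, eW4⟩ := eUW
  have hw2 : w₂ = -a₂ • w₁ := by
    have := ew2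
    rw [add_eq_zero_iff_eq_neg] at this
    rw [this, neg_smul]
  have hw3 : w₃ = -a₃ • w₁ := by
    have := ew3
    rw [add_eq_zero_iff_eq_neg] at this
    rw [this, neg_smul]
  have hw4 : w₄ = -a₄ • w₁ := by
    have := ew4
    rw [add_eq_zero_iff_eq_neg] at this
    rw [this, neg_smul]
  -- Step G : wedge consequences
  have hwedge : ∀ (a : ℝ) (xj : Fin 4 → ℝ) (wj : Fin 4 → ℝ), wj = -a • w₁ →
      (wedge xj wj + a • wedge x₁ w₁) = 0 → a • wedge (x₁ - xj) w₁ = 0 := by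
    intro a xj wj hwj hW
    rw [hwj, wedge_smul_right, neg_smul] at hW
    rw [wedge_sub_left, smul_sub]
    linear_combination (norm := module) hW
  have hW2 := hwedge a₂ x₂ w₂ hw2 eW2
  have hW3 := hwedge a₃ x₃ w₃ hw3 eW3
  have hW4 := hwedge a₄ x₄ w₄ hw4 eW4
  have hWz2 : wedge (x₁ - x₂) w₁ = 0 := (smul_eq_zero.mp hW2).resolve_left ha₂
  have hWz3 : wedge (x₁ - x₃) w₁ = 0 := (smul_eq_zero.mp hW3).resolve_left ha₃
  have hWz4 : wedge (x₁ - x₄) w₁ = 0 := (smul_eq_zero.mp hW4).resolve_left ha₄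
  -- Step H : w₁ = 0
  have hw1 : w₁ = 0 := by
    by_contra hw₁
    obtain ⟨c₂, hc₂⟩ := wedge_dep hWz2 hw₁
    obtain ⟨c₃, hc₃⟩ := wedge_dep hWz3 hw₁
    obtain ⟨c₄, hc₄⟩ := wedge_dep hWz4 hw₁
    have hsub : ({q₂, q₃, q₄} : Set (Fin 4 → ℝ)) ⊆
        (Submodule.span ℝ ({q₁, w₁} : Set (Fin 4 → ℝ)) : Submodule ℝ (Fin 4 → ℝ)) := by
      have hmem : ∀ (qj xj : Fin 4 → ℝ) (c : ℝ), qj = x - xj → x₁ - xj = c • w₁ →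
          qj ∈ Submodule.span ℝ ({q₁, w₁} : Set (Fin 4 → ℝ)) := by
        intro qj xj c hqj hc
        have : qj = q₁ + c • w₁ := by
          rw [hqj, hq₁def, ← hc]
          funext i
          simp
        rw [this]
        exact Submodule.add_mem _ (Submodule.subset_span (Set.mem_insert _ _))
          (Submodule.smul_mem _ _ (Submodule.subset_span (Set.subset_insert _ _ rfl)))
      intro z hz
      simp only [Set.mem_insert_iff, Set.mem_singleton_iff] at hz
      rcases hz with rfl | rfl | rfl
      · exact hmem q₂ x₂ c₂ hq₂def hc₂
      · exact hmem q₃ x₃ c₃ hq₃def hc₃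
      · exact hmem q₄ x₄ c₄ hq₄def hc₄
    have := span_le_pair_finrank hsub
    omega
  refine ⟨hw1, ?_, ?_, ?_⟩ <;> simp [hw2, hw3, hw4, hw1]
end

section
/- Main no-interaction step (cases (a),(b),(c)): Let q₁, q₂, q₃, q₄ be nonzero future null vectors in four-dimensional Minkowski space with q₁ not parallel to q₂, q₃, q₄, and suppose span{q₁, q₂, q₃, q₄} together with span{q₂, q₃, q₄} is NOT of the configuration (dim 3, dim 3). Let w₁, ..., w₄ ∈ V satisfy Σᵢ ⟨qᵢ|v⟩wᵢ = 0 for all v ∈ V. Then w₁ = 0. -/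
lemma par_of_mink_eq_zero {p q : Fin 4 → ℝ} (hp : FutureNull p) (hq : FutureNull q)
    (h : mink p q = 0) : Par p q := by
  obtain ⟨_, hp0, hp1⟩ := hp
  obtain ⟨_, hq0, hq1⟩ := hq
  unfold IsNull mink at *
  have hsum : (q 0 * p 1 - p 0 * q 1)^2 + (q 0 * p 2 - p 0 * q 2)^2
      + (q 0 * p 3 - p 0 * q 3)^2 = 0 := by
    linear_combination -(q 0)^2 * hp0 - (p 0)^2 * hq0 + 2 * p 0 * q 0 * h
  have key : ∀ i, q 0 * p i = p 0 * q i := by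
    intro i
    fin_cases i <;> simp <;>
      nlinarith [sq_nonneg (q 0 * p 1 - p 0 * q 1), sq_nonneg (q 0 * p 2 - p 0 * q 2),
        sq_nonneg (q 0 * p 3 - p 0 * q 3)]
  refine ⟨q 0 / p 0, Or.inl ?_⟩
  funext i
  simp only [Pi.smul_apply, smul_eq_mul]
  rw [div_mul_eq_mul_div, eq_div_iff hp1.ne']
  linarith [key i]

/-- If `x` is not in the span of `{u, v, w}`, there is `r` Minkowski-orthogonal to
`u, v, w` but not to `x`. -/
lemma exists_mink_orthogonal {x u v w : Fin 4 → ℝ}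
    (hx : x ∉ Submodule.span ℝ ({u, v, w} : Set (Fin 4 → ℝ))) :
    ∃ r : Fin 4 → ℝ, mink u r = 0 ∧ mink v r = 0 ∧ mink w r = 0 ∧ mink x r ≠ 0 := by
  obtain ⟨f, hfx, hfmap⟩ :=
    (Submodule.span ℝ ({u, v, w} : Set (Fin 4 → ℝ))).exists_dual_map_eq_bot_of_notMem hx
      inferInstance
  have hker : ∀ y ∈ Submodule.span ℝ ({u, v, w} : Set (Fin 4 → ℝ)), f y = 0 := by
    intro y hy
    have : f y ∈ Submodule.map f (Submodule.span ℝ ({u, v, w} : Set (Fin 4 → ℝ))) :=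
      Submodule.mem_map_of_mem hy
    rw [hfmap] at this
    simpa using this
  let e : Fin 4 → (Fin 4 → ℝ) := fun i => Pi.single i 1
  refine ⟨![f (e 0), -f (e 1), -f (e 2), -f (e 3)], ?_, ?_, ?_, ?_⟩ <;>
  · rw [show ∀ p : Fin 4 → ℝ, mink p ![f (e 0), -f (e 1), -f (e 2), -f (e 3)] = f p from ?_]
    · first
      | exact hker _ (Submodule.subset_span (by simp))
      | exact hfx
    · intro p
      have hp : p = p 0 • e 0 + p 1 • e 1 + p 2 • e 2 + p 3 • e 3 := by
        funext i; fin_cases i <;> simp [e, Pi.single_apply]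
      conv_rhs => rw [hp]
      simp [mink, map_add, map_smul]


open Module Submodule

theorem no_interaction_nondegenerate_cases
    (q₁ q₂ q₃ q₄ : Fin 4 → ℝ)
    (hfn₁ : FutureNull q₁) (hfn₂ : FutureNull q₂)
    (hfn₃ : FutureNull q₃) (hfn₄ : FutureNull q₄)
    (h₁₂ : ¬ Par q₁ q₂) (h₁₃ : ¬ Par q₁ q₃) (h₁₄ : ¬ Par q₁ q₄)
    (hconf : ¬ (Module.finrank ℝ
        (Submodule.span ℝ ({q₂, q₃, q₄} : Set (Fin 4 → ℝ))) = 3 ∧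
      Module.finrank ℝ
        (Submodule.span ℝ ({q₁, q₂, q₃, q₄} : Set (Fin 4 → ℝ))) = 3))
    (w₁ w₂ w₃ w₄ : Fin 4 → ℝ)
    (hQ : ∀ v : Fin 4 → ℝ,
      mink q₁ v • w₁ + mink q₂ v • w₂ + mink q₃ v • w₃ + mink q₄ v • w₄ = 0) :
    w₁ = 0 := by
  set W := Submodule.span ℝ ({q₂, q₃, q₄} : Set (Fin 4 → ℝ)) with hW
  have hm12 : mink q₁ q₂ ≠ 0 := fun h => h₁₂ (par_of_mink_eq_zero hfn₁ hfn₂ h)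
  -- q₁ is not in the span of {q₂, q₃, q₄}
  have hnotmem : q₁ ∉ W := by
    intro hmem
    have hspan_eq : Submodule.span ℝ ({q₁, q₂, q₃, q₄} : Set (Fin 4 → ℝ)) = W :=
      Submodule.span_insert_eq_span hmem
    have hd3 : finrank ℝ W ≠ 3 := fun h => hconf ⟨h, by rw [hspan_eq]; exact h⟩
    have hle3 : finrank ℝ W ≤ 3 := by
      have hr : ({q₂, q₃, q₄} : Set (Fin 4 → ℝ)) = Set.range ![q₂, q₃, q₄] := by
        ext y; simp [Matrix.range_cons, Matrix.range_empty]; tauto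
      rw [hW, hr]
      exact finrank_range_le_card ![q₂, q₃, q₄]
    -- q₁, q₂ are linearly independent
    have hindep : LinearIndependent ℝ ![q₁, q₂] := by
      rw [LinearIndependent.pair_iff' hfn₁.1]
      intro a ha
      exact h₁₂ ⟨a, Or.inl ha.symm⟩
    have hrank2 : finrank ℝ (Submodule.span ℝ ({q₁, q₂} : Set (Fin 4 → ℝ))) = 2 := by
      have hr : ({q₁, q₂} : Set (Fin 4 → ℝ)) = Set.range ![q₁, q₂] := by
        ext y; simp [Matrix.range_cons, Matrix.range_empty]; tauto
      rw [hr, finrank_span_eq_card hindep, Fintype.card_fin]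
    have h12le : Submodule.span ℝ ({q₁, q₂} : Set (Fin 4 → ℝ)) ≤ W := by
      rw [Submodule.span_le]
      rintro x (rfl | rfl)
      · exact hmem
      · exact Submodule.subset_span (by simp)
    have hWeq : Submodule.span ℝ ({q₁, q₂} : Set (Fin 4 → ℝ)) = W :=
      Submodule.eq_of_le_of_finrank_le h12le (by omega)
    -- every null vector in W is a multiple of q₁ or q₂
    have hmul : ∀ p : Fin 4 → ℝ, FutureNull p → ¬ Par q₁ p → p ∈ W → ∃ b : ℝ, p = b • q₂ := by
      intro p hfnp hpar hp
      rw [← hWeq, Submodule.mem_span_pair] at hp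
      obtain ⟨a, b, hab⟩ := hp
      have hexp : mink p p = a * a * mink q₁ q₁ + 2 * (a * b) * mink q₁ q₂
          + b * b * mink q₂ q₂ := by
        rw [← hab]; simp only [mink, Pi.add_apply, Pi.smul_apply, smul_eq_mul]; ring
      rw [hfnp.2.1, hfn₁.2.1, hfn₂.2.1] at hexp
      have h2ab : 2 * (a * b) * mink q₁ q₂ = 0 := by linarith
      have hab0 : a * b = 0 := by
        rcases mul_eq_zero.mp h2ab with h | h
        · linarith
        · exact absurd h hm12
      rcases mul_eq_zero.mp hab0 with h | h
      · exact ⟨b, by rw [← hab, h]; simp⟩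
      · exact absurd ⟨a, Or.inl (by rw [← hab, h]; simp)⟩ hpar
    obtain ⟨b, hb⟩ := hmul q₃ hfn₃ h₁₃ (Submodule.subset_span (by simp))
    obtain ⟨c, hc⟩ := hmul q₄ hfn₄ h₁₄ (Submodule.subset_span (by simp))
    have hWle : W ≤ Submodule.span ℝ ({q₂} : Set (Fin 4 → ℝ)) := by
      rw [hW, Submodule.span_le]
      rintro x (rfl | rfl | rfl)
      · exact Submodule.subset_span rfl
      · rw [hb]; exact Submodule.smul_mem _ _ (Submodule.subset_span rfl)
      · rw [hc]; exact Submodule.smul_mem _ _ (Submodule.subset_span rfl)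
    obtain ⟨d, hd⟩ := Submodule.mem_span_singleton.mp (hWle hmem)
    exact h₁₂ ⟨d, Or.inr hd.symm⟩
  obtain ⟨r, h2, h3, h4, h1⟩ := exists_mink_orthogonal hnotmem
  have := hQ r
  rw [h2, h3, h4] at this
  simp only [zero_smul, add_zero] at this
  rcases smul_eq_zero.mp this with h | h
  · exact absurd h h1
  · exact h
end
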